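/- arXiv:2404.04596 — 3 statements merged into one kernel-verified Lean document; each statement's English description precedes it below -/
import Mathlib

section
/- Fix λ > 1 and an integer n ≥ 2, and define F_n on the unit disk 𝔻 by F_n(z) = λ²z − ∫_0^z (λ³ − λ)/(λ + ζ^{n−1}) dζ (integral along the segment from 0 to z). Then F_n is analytic on 𝔻 with F_n(0) = 0, F_n'(0) = 1, |F_n'(z)| ≤ λ for all z ∈ 𝔻, and the n-th Taylor coefficient of F_n at 0 equals (λ² − 1)/(nλ); in particular F_n attains equality in the coefficient bound |a_n| + |b_n| ≤ (1/n)(Kλ + 2(K'−1)/(Kλ + √(K²λ² + 4K'))) for the parameters K = 1, K' = 0. -/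
open Complex Metric intervalIntegral

/-- The complex modulus as an absolute value (removed from Mathlib). -/
noncomputable def Complex.abs : AbsoluteValue ℂ ℝ where
  toFun := fun z => ‖z‖
  map_mul' := norm_mul
  nonneg' := norm_nonneg
  eq_zero' := fun _ => norm_eq_zero
  add_le' := norm_add_le

theorem Complex.norm_eq_abs (z : ℂ) : ‖z‖ = Complex.abs z := rfl

theorem Complex.abs_ofReal (r : ℝ) : Complex.abs (r : ℂ) = |r| := by
  rw [← Complex.norm_eq_abs, Complex.norm_real, Real.norm_eq_abs]

theorem Complex.abs_natCast (n : ℕ) : Complex.abs (n : ℂ) = n := by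
  rw [← Complex.norm_eq_abs]; simp

theorem Complex.abs_apply (z : ℂ) : Complex.abs z = Real.sqrt (Complex.normSq z) :=
  Complex.norm_def z

theorem Complex.normSq_eq_abs (z : ℂ) : Complex.normSq z = Complex.abs z ^ 2 := by
  rw [Complex.normSq_eq_norm_sq]; rfl

namespace ExtremalAux

lemma den_ne {lam : ℝ} (hlam : 1 < lam) {w : ℂ} (hw : Complex.abs w < 1) :
    (lam : ℂ) + w ≠ 0 := by
  intro h
  have hw' : w = -(lam : ℂ) := by linear_combination h
  rw [hw'] at hw
  rw [map_neg_eq_map, abs_ofReal, abs_of_pos (by linarith : (0:ℝ) < lam)] at hw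
  linarith

lemma den_lb {lam : ℝ} (hlam : 1 < lam) {w : ℂ} (hw : Complex.abs w ≤ 1) :
    lam - 1 ≤ Complex.abs ((lam : ℂ) + w) := by
  have h := Complex.abs.add_le ((lam : ℂ) + w) (-w)
  rw [add_neg_cancel_right, map_neg_eq_map, abs_ofReal,
    abs_of_pos (by linarith : (0:ℝ) < lam)] at h
  linarith

lemma abs_c_le {lam : ℝ} (hlam : 1 < lam) :
    Complex.abs ((lam:ℂ)^3 - (lam:ℂ)) ≤ lam^3 + lam := by
  have h := Complex.abs.add_le ((lam:ℂ)^3) (-(lam:ℂ))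
  rw [← sub_eq_add_neg, map_neg_eq_map, map_pow, abs_ofReal,
    abs_of_pos (by linarith : (0:ℝ) < lam)] at h
  linarith


/-- The `x`-derivative of the integrand. -/
noncomputable def D (lam : ℝ) (m : ℕ) (t : ℝ) (x : ℂ) : ℂ :=
  ((lam:ℂ)^3 - (lam:ℂ)) * (-(((m:ℂ) * ((t:ℂ)*x)^(m-1)) * ((t:ℂ)*1)) / ((lam:ℂ) + ((t:ℂ)*x)^m)^2) * x
    + (((lam:ℂ)^3 - (lam:ℂ)) * ((lam:ℂ) + ((t:ℂ)*x)^m)⁻¹) * 1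

lemma hasDerivAt_D (lam : ℝ) (m : ℕ) (t : ℝ) (x : ℂ)
    (hne : (lam:ℂ) + ((t:ℂ)*x)^m ≠ 0) :
    HasDerivAt (fun x : ℂ => (((lam:ℂ)^3 - (lam:ℂ)) * ((lam:ℂ) + ((t:ℂ)*x)^m)⁻¹) * x)
      (D lam m t x) x := by
  have h1 : HasDerivAt (fun x : ℂ => (t:ℂ) * x) ((t:ℂ) * 1) x :=
    (hasDerivAt_id x).const_mul (t:ℂ)
  have h2 := (((h1.pow m).const_add ((lam:ℂ))).inv hne).const_mul ((lam:ℂ)^3 - (lam:ℂ))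
  have h3 := h2.mul (hasDerivAt_id x)
  convert h3 using 1
  all_goals rfl

lemma D_bound {lam : ℝ} (hlam : 1 < lam) (m : ℕ) {t : ℝ} (ht : |t| ≤ 1)
    {x : ℂ} (hx : Complex.abs x ≤ 1) :
    Complex.abs (D lam m t x)
      ≤ (lam^3 + lam) * ((m / (lam-1)^2) + 1/(lam-1)) := by
  have h0 : (0:ℝ) < lam - 1 := by linarith
  have htx : Complex.abs ((t:ℂ)*x) ≤ 1 := by
    rw [map_mul, abs_ofReal]
    calc |t| * Complex.abs x ≤ 1 * 1 := by
          exact mul_le_mul ht hx (Complex.abs.nonneg x) zero_le_one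
      _ = 1 := by norm_num
  have hden : lam - 1 ≤ Complex.abs ((lam:ℂ) + ((t:ℂ)*x)^m) := by
    refine den_lb hlam ?_
    rw [map_pow]; exact pow_le_one₀ (Complex.abs.nonneg _) htx
  have hc := abs_c_le hlam
  have hA : Complex.abs (((lam:ℂ)^3 - (lam:ℂ)) *
      (-(((m:ℂ) * ((t:ℂ)*x)^(m-1)) * ((t:ℂ)*1)) / ((lam:ℂ) + ((t:ℂ)*x)^m)^2) * x)
      ≤ (lam^3 + lam) * (m / (lam-1)^2) := by
    simp only [mul_one]
    rw [map_mul, map_mul, map_div₀, map_neg_eq_map, map_mul, map_mul, map_pow, map_pow,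
      abs_natCast, abs_ofReal]
    calc Complex.abs ((lam:ℂ)^3 - (lam:ℂ)) *
          ((m * Complex.abs ((t:ℂ)*x) ^ (m-1) * |t|) / Complex.abs ((lam:ℂ) + ((t:ℂ)*x)^m) ^ 2)
          * Complex.abs x
        ≤ (lam^3 + lam) * ((m * 1 * 1) / (lam-1)^2) * 1 := by
          gcongr
          exact pow_le_one₀ (Complex.abs.nonneg _) htx
      _ = (lam^3 + lam) * (m / (lam-1)^2) := by ring
  have hB : Complex.abs ((((lam:ℂ)^3 - (lam:ℂ)) * ((lam:ℂ) + ((t:ℂ)*x)^m)⁻¹) * 1)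
      ≤ (lam^3 + lam) * (1/(lam-1)) := by
    rw [mul_one, map_mul, map_inv₀]
    calc Complex.abs ((lam:ℂ)^3 - (lam:ℂ)) * (Complex.abs ((lam:ℂ) + ((t:ℂ)*x)^m))⁻¹
        ≤ (lam^3 + lam) * (lam-1)⁻¹ := by
          gcongr
      _ = (lam^3 + lam) * (1/(lam-1)) := by ring
  calc Complex.abs (D lam m t x) ≤ _ + _ := Complex.abs.add_le _ _
    _ ≤ (lam^3 + lam) * (m / (lam-1)^2) + (lam^3 + lam) * (1/(lam-1)) := add_le_add hA hB
    _ = (lam^3 + lam) * ((m / (lam-1)^2) + 1/(lam-1)) := by ring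

lemma hasDerivAt_integral {lam : ℝ} (hlam : 1 < lam) {m : ℕ} (hm : 1 ≤ m) {x₀ : ℂ}
    (hx₀ : Complex.abs x₀ < 1) :
    HasDerivAt (fun z : ℂ => ∫ t in (0:ℝ)..1,
        (((lam:ℂ)^3 - (lam:ℂ)) / ((lam:ℂ) + ((t:ℂ)*z)^m)) * z)
      (((lam:ℂ)^3 - (lam:ℂ)) / ((lam:ℂ) + x₀^m)) x₀ := by
  simp only [div_eq_mul_inv]
  have hr1 : (1 + Complex.abs x₀)/2 < 1 := by linarith
  have hr0 : Complex.abs x₀ < (1 + Complex.abs x₀)/2 := by linarith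
  set r : ℝ := (1 + Complex.abs x₀)/2 with hrdef
  set ε : ℝ := r - Complex.abs x₀ with hεdef
  have hε : 0 < ε := by simp only [hεdef]; linarith
  have hmem : ∀ x ∈ ball x₀ ε, Complex.abs x < r := by
    intro x hx
    have hd : Complex.abs (x - x₀) < ε := by rwa [mem_ball, Complex.dist_eq] at hx
    calc Complex.abs x = Complex.abs (x - x₀ + x₀) := by ring_nf
      _ ≤ Complex.abs (x - x₀) + Complex.abs x₀ := Complex.abs.add_le _ _
      _ < ε + Complex.abs x₀ := by linarith
      _ = r := by simp [hεdef]
  have ht1 : ∀ t ∈ Set.uIcc (0:ℝ) 1, |t| ≤ 1 := by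
    intro t ht; rw [Set.uIcc_of_le zero_le_one] at ht
    rw [_root_.abs_of_nonneg ht.1]; exact ht.2
  have hne : ∀ (t:ℝ), |t| ≤ 1 → ∀ (x:ℂ), Complex.abs x < 1 →
      (lam:ℂ) + ((t:ℂ)*x)^m ≠ 0 := by
    intro t ht x hx
    apply den_ne hlam
    rw [map_pow]
    apply pow_lt_one₀ (Complex.abs.nonneg _) _ (by omega)
    rw [map_mul, abs_ofReal]
    calc |t| * Complex.abs x ≤ 1 * Complex.abs x :=
          mul_le_mul_of_nonneg_right ht (Complex.abs.nonneg x)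
      _ = Complex.abs x := one_mul _
      _ < 1 := hx
  have contPhi : ∀ x : ℂ, Complex.abs x < 1 →
      ContinuousOn (fun t : ℝ => (((lam:ℂ)^3 - (lam:ℂ)) * ((lam:ℂ) + ((t:ℂ)*x)^m)⁻¹) * x)
        (Set.uIcc (0:ℝ) 1) := by
    intro x hx
    have c1 : Continuous (fun t : ℝ => (lam:ℂ) + ((t:ℂ)*x)^m) := by fun_prop
    exact (continuousOn_const.mul (c1.continuousOn.inv₀
      fun t ht => hne t (ht1 t ht) x hx)).mul continuousOn_const
  have contD : ∀ x : ℂ, Complex.abs x < 1 →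
      ContinuousOn (fun t : ℝ => D lam m t x) (Set.uIcc (0:ℝ) 1) := by
    intro x hx
    unfold D
    have c1 : Continuous (fun t : ℝ => (lam:ℂ) + ((t:ℂ)*x)^m) := by fun_prop
    have c2 : Continuous (fun t : ℝ => -(((m:ℂ) * ((t:ℂ)*x)^(m-1)) * ((t:ℂ)*1))) := by fun_prop
    apply ContinuousOn.add
    · exact (continuousOn_const.mul (c2.continuousOn.div (c1.pow 2).continuousOn
        (fun t ht => pow_ne_zero _ (hne t (ht1 t ht) x hx)))).mul continuousOn_const
    · exact (continuousOn_const.mul (c1.continuousOn.inv₀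
        (fun t ht => hne t (ht1 t ht) x hx))).mul continuousOn_const
  have hx1 : ∀ x ∈ ball x₀ ε, Complex.abs x < 1 := fun x hx => (hmem x hx).trans hr1
  have key := intervalIntegral.hasDerivAt_integral_of_dominated_loc_of_deriv_le
      (F := fun (x : ℂ) (t : ℝ) => (((lam:ℂ)^3 - (lam:ℂ)) * ((lam:ℂ) + ((t:ℂ)*x)^m)⁻¹) * x)
      (F' := fun (x : ℂ) (t : ℝ) => D lam m t x) (x₀ := x₀) (a := 0) (b := 1)
      (μ := MeasureTheory.volume)
      (bound := fun _ => (lam^3 + lam) * ((m / (lam-1)^2) + 1/(lam-1)))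
      (ball_mem_nhds x₀ hε) ?_ ?_ ?_ ?_ ?_ ?_
  · have hFTC : (∫ t in (0:ℝ)..1, D lam m t x₀)
        = ((lam:ℂ)^3 - (lam:ℂ)) * ((lam:ℂ) + x₀^m)⁻¹ := by
      have hd : ∀ t ∈ Set.uIcc (0:ℝ) 1,
          HasDerivAt (fun s : ℝ => (s:ℂ) * (((lam:ℂ)^3 - (lam:ℂ)) * ((lam:ℂ) + ((s:ℂ)*x₀)^m)⁻¹))
            (D lam m t x₀) t := by
        intro t ht
        have h1 : HasDerivAt (fun w : ℂ => w * x₀) ((1:ℂ)*x₀) (t:ℂ) :=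
          (hasDerivAt_id _).mul_const x₀
        have h2 := (((h1.pow m).const_add ((lam:ℂ))).inv
          (hne t (ht1 t ht) x₀ hx₀)).const_mul ((lam:ℂ)^3 - (lam:ℂ))
        have h3 := ((hasDerivAt_id' ((t:ℝ):ℂ)).mul h2).comp_ofReal
        convert h3 using 1
        · rfl
        unfold D
        simp only [Pi.pow_apply, Pi.inv_apply]
        ring
      rw [intervalIntegral.integral_eq_sub_of_hasDerivAt hd
        ((contD x₀ hx₀).intervalIntegrable)]
      push_cast
      simp
    rw [hFTC] at key
    exact key.2
  · filter_upwards [ball_mem_nhds x₀ hε] with x hx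
    exact ((contPhi x (hx1 x hx)).mono Set.uIoc_subset_uIcc).aestronglyMeasurable
      measurableSet_uIoc
  · exact (contPhi x₀ hx₀).intervalIntegrable
  · exact ((contD x₀ hx₀).mono Set.uIoc_subset_uIcc).aestronglyMeasurable measurableSet_uIoc
  · apply Filter.Eventually.of_forall
    intro t ht x hx
    rw [Complex.norm_eq_abs]
    exact D_bound hlam m (ht1 t (Set.uIoc_subset_uIcc ht)) (le_of_lt (hx1 x hx))
  · exact intervalIntegrable_const
  · apply Filter.Eventually.of_forall
    intro t ht x hx
    exact hasDerivAt_D lam m t x (hne t (ht1 t (Set.uIoc_subset_uIcc ht)) x (hx1 x hx))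

lemma iteratedDeriv_g {lam : ℝ} (hlam : 1 < lam) {m : ℕ} (hm : 1 ≤ m) :
    iteratedDeriv m (fun z : ℂ => ((lam:ℂ)^3 - (lam:ℂ)) / ((lam:ℂ) + z^m)) 0
      = (m.factorial : ℂ) * (((lam:ℂ)^2 - 1) * (-(lam:ℂ)⁻¹)) := by
  have hm0 : m ≠ 0 := by omega
  have hL0 : (lam:ℂ) ≠ 0 := by
    simp only [ne_eq, ofReal_eq_zero]; linarith
  set g : ℂ → ℂ := fun z => ((lam:ℂ)^3 - (lam:ℂ)) / ((lam:ℂ) + z^m) with hg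
  set cs : ℕ → ℂ := fun k =>
    if m ∣ k then (((lam:ℂ)^2 - 1) * (-(lam:ℂ)⁻¹)^(k/m)) else 0 with hcs
  have hcoeff : ∀ k, (FormalMultilinearSeries.ofScalars ℂ cs).coeff k = cs k := by
    intro k
    simpa using FormalMultilinearSeries.ofScalars_apply_eq (𝕜 := ℂ) (E := ℂ) cs 1 k
  have hps : HasFPowerSeriesAt g (FormalMultilinearSeries.ofScalars ℂ cs) 0 := by
    rw [hasFPowerSeriesAt_iff]
    filter_upwards [Metric.ball_mem_nhds (0:ℂ) one_pos] with z hz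
    rw [mem_ball_zero_iff, Complex.norm_eq_abs] at hz
    have hzm : Complex.abs (z^m) < 1 := by
      rw [map_pow]; exact pow_lt_one₀ (Complex.abs.nonneg _) hz hm0
    have hden : (lam:ℂ) + z^m ≠ 0 := den_ne hlam hzm
    set w : ℂ := (-(lam:ℂ)⁻¹) * z^m with hw
    have hwn : ‖w‖ < 1 := by
      rw [Complex.norm_eq_abs, hw, map_mul, map_neg_eq_map, map_inv₀, abs_ofReal,
        abs_of_pos (by linarith : (0:ℝ) < lam)]
      have h1 : lam⁻¹ ≤ 1 := by
        rw [inv_le_one_iff₀]; right; linarith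
      calc lam⁻¹ * Complex.abs (z^m) ≤ 1 * Complex.abs (z^m) :=
            mul_le_mul_of_nonneg_right h1 (Complex.abs.nonneg _)
        _ = Complex.abs (z^m) := one_mul _
        _ < 1 := hzm
    have hgeo := (hasSum_geometric_of_norm_lt_one hwn).mul_left (((lam:ℂ)^2 - 1))
    have h1w : (1:ℂ) - w = ((lam:ℂ) + z^m) * (lam:ℂ)⁻¹ := by
      field_simp [hw]
      rw [hw]; linear_combination (z^m) * (inv_mul_cancel₀ hL0)
    have hval : ((lam:ℂ)^2 - 1) * ((1:ℂ) - w)⁻¹ = g (0 + z) := by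
      rw [h1w, zero_add, hg]
      field_simp
    rw [← hval]
    have hinj : Function.Injective (fun j : ℕ => m * j) := fun a b h =>
      Nat.eq_of_mul_eq_mul_left (by omega) h
    apply (Function.Injective.hasSum_iff hinj ?_).mp
    · convert hgeo with j
      · rfl
      simp only [Function.comp_apply, hcoeff]
      rw [hcs]
      simp only [Dvd.intro j rfl, if_pos, Nat.mul_div_cancel_left j (by omega : 0 < m)]
      rw [smul_eq_mul, hw, mul_pow, pow_mul]
      ring
    · intro k hk
      have : ¬ m ∣ k := by
        intro ⟨j, hj⟩
        exact hk ⟨j, hj.symm⟩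
      simp [hcoeff, hcs, this]
  obtain ⟨R, hR⟩ := hps
  have hfact := hR.factorial_smul (1:ℂ) m
  rw [← iteratedDeriv_eq_iteratedFDeriv] at hfact
  rw [← hfact]
  have : (FormalMultilinearSeries.ofScalars ℂ cs) m (fun _ => (1:ℂ)) = cs m := by
    rw [FormalMultilinearSeries.ofScalars_apply_eq]; simp
  rw [this, hcs]
  simp only [dvd_refl, if_pos, Nat.div_self (by omega : 0 < m), pow_one]
  simp [nsmul_eq_mul]

end ExtremalAux

open ExtremalAux

/-- The extremal function `F_n(z) = λ²z − ∫_0^z (λ³−λ)/(λ+ζ^{n−1}) dζ`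
(integral along the segment from 0 to z) is analytic on the unit disk with
`F_n(0) = 0`, `F_n'(0) = 1`, `|F_n'(z)| ≤ λ`, whose n-th Taylor coefficient at 0
equals `(λ²−1)/(nλ)`; in particular it attains equality in the coefficient bound
for the parameters K = 1, K' = 0. -/
theorem extremal_function_properties
    (lam : ℝ) (hlam : 1 < lam) (n : ℕ) (hn : 2 ≤ n)
    (F : ℂ → ℂ)
    (hF : ∀ z : ℂ, F z = (lam : ℂ) ^ 2 * z -
      ∫ t in (0 : ℝ)..1,
        (((lam : ℂ) ^ 3 - (lam : ℂ)) / ((lam : ℂ) + ((t : ℂ) * z) ^ (n - 1))) * z) :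
    AnalyticOnNhd ℂ F (ball 0 1) ∧
    F 0 = 0 ∧
    deriv F 0 = 1 ∧
    (∀ z ∈ ball (0 : ℂ) 1, ‖deriv F z‖ ≤ lam) ∧
    iteratedDeriv n F 0 / ((Nat.factorial n : ℕ) : ℂ) = ((lam : ℂ) ^ 2 - 1) / ((n : ℂ) * (lam : ℂ)) ∧
    ‖iteratedDeriv n F 0 / ((Nat.factorial n : ℕ) : ℂ)‖ + ‖(0 : ℂ)‖ =
      (1 / n) * (1 * lam + 2 * ((0 : ℝ) - 1) /
        (1 * lam + Real.sqrt (1 ^ 2 * lam ^ 2 + 4 * 0))) := by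
  obtain ⟨m, rfl⟩ : ∃ m, n = m + 1 := ⟨n - 1, by omega⟩
  simp only [Nat.add_sub_cancel] at hF
  have hm : 1 ≤ m := by omega
  have hL0 : (lam:ℂ) ≠ 0 := by simp only [ne_eq, ofReal_eq_zero]; linarith
  have hlam0 : (0:ℝ) < lam := by linarith
  -- the pointwise derivative
  have hDF : ∀ z : ℂ, Complex.abs z < 1 →
      HasDerivAt F ((lam:ℂ)^2 - ((lam:ℂ)^3 - (lam:ℂ)) / ((lam:ℂ) + z^m)) z := by
    intro z hz
    have h1 : HasDerivAt (fun w : ℂ => (lam:ℂ)^2 * w) ((lam:ℂ)^2) z := by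
      simpa using (hasDerivAt_id z).const_mul ((lam:ℂ)^2)
    have h2 := h1.sub (hasDerivAt_integral hlam hm hz)
    refine HasDerivAt.congr_of_eventuallyEq h2 ?_
    filter_upwards with w
    rw [hF w]
    rfl
  have hball : ∀ z : ℂ, z ∈ ball (0:ℂ) 1 → Complex.abs z < 1 := by
    intro z hz; rwa [mem_ball_zero_iff, Complex.norm_eq_abs] at hz
  refine ⟨?_, ?_, ?_, ?_, ?_, ?_⟩
  · exact DifferentiableOn.analyticOnNhd
      (fun z hz => (hDF z (hball z hz)).differentiableAt.differentiableWithinAt) isOpen_ball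
  · rw [hF 0]; simp
  · rw [(hDF 0 (by simp)).deriv]
    rw [zero_pow (by omega : m ≠ 0), add_zero]
    field_simp
    ring
  · intro z hz
    have hz' := hball z hz
    rw [(hDF z hz').deriv]
    have hzm : Complex.abs (z^m) < 1 := by
      rw [map_pow]; exact pow_lt_one₀ (Complex.abs.nonneg _) hz' (by omega)
    have hden : (lam:ℂ) + z^m ≠ 0 := den_ne hlam hzm
    have heq : (lam:ℂ)^2 - ((lam:ℂ)^3 - (lam:ℂ))/((lam:ℂ) + z^m)
        = (lam:ℂ) * (1 + (lam:ℂ) * z^m) / ((lam:ℂ) + z^m) := by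
      field_simp
      ring
    rw [heq, Complex.norm_eq_abs, map_div₀, map_mul, abs_ofReal, abs_of_pos hlam0]
    rw [div_le_iff₀ (Complex.abs.pos hden)]
    have key : Complex.abs (1 + (lam:ℂ)*z^m) ≤ Complex.abs ((lam:ℂ) + z^m) := by
      rw [Complex.abs_apply, Complex.abs_apply]
      apply Real.sqrt_le_sqrt
      have hns : Complex.normSq (z^m) < 1 := by
        rw [Complex.normSq_eq_abs]
        nlinarith [Complex.abs.nonneg (z^m)]
      rw [Complex.normSq_add, Complex.normSq_add]
      simp only [Complex.normSq_one, Complex.normSq_mul, Complex.normSq_ofReal, one_mul,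
        map_mul, Complex.conj_ofReal, Complex.re_ofReal_mul]
      nlinarith [mul_pos (by nlinarith : (0:ℝ) < lam*lam - 1)
        (by linarith : (0:ℝ) < 1 - Complex.normSq (z^m))]
    gcongr
  · -- the coefficient computation
    have hEv : deriv F =ᶠ[nhds (0:ℂ)]
        fun z => (lam:ℂ)^2 - ((lam:ℂ)^3 - (lam:ℂ)) / ((lam:ℂ) + z^m) := by
      filter_upwards [Metric.ball_mem_nhds (0:ℂ) one_pos] with z hz
      exact (hDF z (hball z hz)).deriv
    have hIter : iteratedDeriv (m+1) F 0
        = (m.factorial : ℂ) * (((lam:ℂ)^2 - 1) * (lam:ℂ)⁻¹) := by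
      rw [iteratedDeriv_succ']
      rw [Filter.EventuallyEq.iteratedDeriv_eq m hEv]
      obtain ⟨k, rfl⟩ : ∃ k, m = k + 1 := ⟨m - 1, by omega⟩
      rw [iteratedDeriv_succ']
      have hd : deriv (fun z : ℂ => (lam:ℂ)^2 - ((lam:ℂ)^3 - (lam:ℂ)) / ((lam:ℂ) + z^(k+1)))
          = fun z => -deriv (fun z : ℂ => ((lam:ℂ)^3 - (lam:ℂ)) / ((lam:ℂ) + z^(k+1))) z :=
        funext fun z => deriv_const_sub _
      rw [hd]
      rw [iteratedDeriv_fun_neg]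
      rw [← iteratedDeriv_succ']
      rw [iteratedDeriv_g hlam (by omega : 1 ≤ k+1)]
      ring
    rw [hIter, Nat.factorial_succ]
    have hfac : ((m.factorial : ℕ) : ℂ) ≠ 0 := Nat.cast_ne_zero.mpr m.factorial_ne_zero
    have hm1 : ((m:ℂ) + 1) ≠ 0 := by
      have h' : ((m+1 : ℕ):ℂ) ≠ 0 := Nat.cast_ne_zero.mpr (by omega)
      push_cast at h'; exact h'
    push_cast
    field_simp
  · -- the numeric equality
    have hIter : iteratedDeriv (m+1) F 0
        = (m.factorial : ℂ) * (((lam:ℂ)^2 - 1) * (lam:ℂ)⁻¹) := by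
      have hEv : deriv F =ᶠ[nhds (0:ℂ)]
          fun z => (lam:ℂ)^2 - ((lam:ℂ)^3 - (lam:ℂ)) / ((lam:ℂ) + z^m) := by
        filter_upwards [Metric.ball_mem_nhds (0:ℂ) one_pos] with z hz
        exact (hDF z (hball z hz)).deriv
      rw [iteratedDeriv_succ']
      rw [Filter.EventuallyEq.iteratedDeriv_eq m hEv]
      obtain ⟨k, rfl⟩ : ∃ k, m = k + 1 := ⟨m - 1, by omega⟩
      rw [iteratedDeriv_succ']
      have hd : deriv (fun z : ℂ => (lam:ℂ)^2 - ((lam:ℂ)^3 - (lam:ℂ)) / ((lam:ℂ) + z^(k+1)))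
          = fun z => -deriv (fun z : ℂ => ((lam:ℂ)^3 - (lam:ℂ)) / ((lam:ℂ) + z^(k+1))) z :=
        funext fun z => deriv_const_sub _
      rw [hd, iteratedDeriv_fun_neg, ← iteratedDeriv_succ',
        iteratedDeriv_g hlam (by omega : 1 ≤ k+1)]
      ring
    have hval : iteratedDeriv (m+1) F 0 / (((m+1).factorial : ℕ) : ℂ)
        = (((lam^2 - 1) / ((m+1) * lam) : ℝ) : ℂ) := by
      rw [hIter, Nat.factorial_succ]
      have hfac : ((m.factorial : ℕ) : ℂ) ≠ 0 := Nat.cast_ne_zero.mpr m.factorial_ne_zero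
      have hm1 : ((m:ℂ) + 1) ≠ 0 := by
        have h' : ((m+1 : ℕ):ℂ) ≠ 0 := Nat.cast_ne_zero.mpr (by omega)
        push_cast at h'; exact h'
      have hm1' : ((m:ℝ) + 1) ≠ 0 := by positivity
      push_cast
      field_simp
    rw [hval, Complex.norm_eq_abs, Complex.norm_eq_abs, abs_ofReal, map_zero, add_zero]
    have hs : Real.sqrt (1 ^ 2 * lam ^ 2 + 4 * 0) = lam := by
      rw [show (1:ℝ) ^ 2 * lam ^ 2 + 4 * 0 = lam ^ 2 by ring]
      exact Real.sqrt_sq hlam0.le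
    rw [hs]
    rw [_root_.abs_of_nonneg (div_nonneg (by nlinarith) (by positivity))]
    have hm1' : ((m:ℝ) + 1) ≠ 0 := by positivity
    push_cast
    field_simp
    ring
end

section
/- Let K ≥ 1 and K' ≥ 0, and let f = h + conj(g) be a sense-preserving (K,K')-elliptic harmonic mapping on the unit disk 𝔻 with f(0) = 0, λ_f(0) = 1, and λ_f(z) ≤ λ for all z ∈ 𝔻 (λ ≥ 1). Set C = Kλ + 2(K'−1)/(Kλ + √(K²λ² + 4K')). Then for every r with 0 < r < 1 and all z₁, z₂ ∈ 𝔻_r, one has |f(z₁) − f(z₂)| ≥ |z₁ − z₂|·(1 − C·r/(1 − r)). -/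
open Complex Metric ComplexConjugate


/-- Schwarz–Pick-type estimate. -/
lemma sp_aux (F : ℂ → ℂ) (M : ℝ) (hd : DifferentiableOn ℂ F (ball 0 1))
    (hbd : ∀ z ∈ ball (0:ℂ) 1, ‖F z‖ ≤ M)
    (h0 : 1 ≤ ‖F 0‖) (r : ℝ) (hr0 : 0 < r) (hr1 : r < 1)
    (ζ : ℂ) (hζ : ζ ∈ ball (0:ℂ) r) :
    ‖F ζ - F 0‖ ≤ (M - 1/M) * r / (1 - r) := by
  have hζ1 : ζ ∈ ball (0:ℂ) 1 := ball_subset_ball hr1.le hζ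
  have h01 : (0:ℂ) ∈ ball (0:ℂ) 1 := mem_ball_self one_pos
  have hM1 : 1 ≤ M := le_trans h0 (hbd 0 h01)
  have hM0 : 0 < M := by linarith
  have hRHS : 0 ≤ (M - 1/M) * r / (1 - r) := by
    apply div_nonneg _ (by linarith)
    apply mul_nonneg _ hr0.le
    have : 1/M ≤ 1 := by rw [div_le_one hM0]; exact hM1
    linarith
  by_cases hmax : ∃ z₀ ∈ ball (0:ℂ) 1, M ≤ ‖F z₀‖
  · obtain ⟨z₀, hz₀, hz₀M⟩ := hmax
    have hconst := Complex.eqOn_of_isPreconnected_of_isMaxOn_norm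
      (convex_ball (0:ℂ) 1).isPreconnected isOpen_ball hd hz₀
      (fun y hy => by
        simp only [Function.comp, Set.mem_setOf_eq]
        exact le_trans (hbd y hy) hz₀M)
    have e1 : F ζ = F z₀ := hconst hζ1
    have e2 : F 0 = F z₀ := hconst h01
    rw [e1, e2, sub_self, norm_zero]; exact hRHS
  · push_neg at hmax
    have hstrict : ∀ z ∈ ball (0:ℂ) 1, ‖F z‖ < M := hmax
    set a : ℂ := F 0 with ha
    have haM : ‖a‖ < M := hstrict 0 h01
    set G : ℂ → ℂ := fun z => (M:ℂ) * (F z - a) / ((M:ℂ)^2 - conj a * F z) with hG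
    have absnum : ∀ z : ℂ, ‖(M:ℂ) * (F z - a)‖ = M * ‖F z - a‖ := by
      intro z; rw [norm_mul, Complex.norm_real, Real.norm_eq_abs, abs_of_pos hM0]
    have keysq : ∀ z ∈ ball (0:ℂ) 1,
        (‖(M:ℂ) * (F z - a)‖)^2 < (‖(M:ℂ)^2 - conj a * F z‖)^2 := by
      intro z hz
      rw [Complex.sq_norm, Complex.sq_norm]
      have expand : Complex.normSq ((M:ℂ)^2 - conj a * F z)
          - Complex.normSq ((M:ℂ) * (F z - a))
          = (M^2 - Complex.normSq a) * (M^2 - Complex.normSq (F z)) := by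
        simp only [Complex.normSq_apply, Complex.sub_re, Complex.sub_im, Complex.mul_re,
          Complex.mul_im, Complex.conj_re, Complex.conj_im, Complex.ofReal_re,
          Complex.ofReal_im, pow_two]
        ring
      have p1 : 0 < M^2 - Complex.normSq a := by
        nlinarith [Complex.sq_norm a, norm_nonneg a, haM]
      have p2 : 0 < M^2 - Complex.normSq (F z) := by
        nlinarith [Complex.sq_norm (F z), norm_nonneg (F z), hstrict z hz]
      nlinarith
    have hden : ∀ z ∈ ball (0:ℂ) 1, ((M:ℂ)^2 - conj a * F z) ≠ 0 := by
      intro z hz hc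
      have := keysq z hz
      rw [hc, norm_zero] at this
      nlinarith [norm_nonneg ((M:ℂ) * (F z - a))]
    have hGd : DifferentiableOn ℂ G (ball 0 1) := by
      apply DifferentiableOn.div
      · exact (differentiableOn_const _).mul (hd.sub (differentiableOn_const _))
      · exact (differentiableOn_const _).sub ((differentiableOn_const _).mul hd)
      · exact hden
    have hG0 : G 0 = 0 := by simp [hG, ← ha]
    have hGlt : ∀ z ∈ ball (0:ℂ) 1, ‖G z‖ < 1 := by
      intro z hz
      have hdz := hden z hz
      have hpos : 0 < ‖(M:ℂ)^2 - conj a * F z‖ := norm_pos_iff.mpr hdz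
      rw [hG]
      simp only [norm_div]
      rw [div_lt_one hpos]
      nlinarith [keysq z hz, norm_nonneg ((M:ℂ) * (F z - a))]
    have hGmaps : Set.MapsTo G (ball (0:ℂ) 1) (ball (0:ℂ) 1) := by
      intro z hz; rw [mem_ball_zero_iff]; exact hGlt z hz
    have hSch : ‖G ζ‖ ≤ ‖ζ‖ :=
      Complex.norm_le_norm_of_mapsTo_ball hGd (hGmaps.mono_right ball_subset_closedBall) hG0 (mem_ball_zero_iff.mp hζ1)
    have hdζ := hden ζ hζ1
    have hposζ : 0 < ‖(M:ℂ)^2 - conj a * F ζ‖ := norm_pos_iff.mpr hdζ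
    set d := ‖F ζ - a‖ with hdd
    set t := ‖ζ‖ with htt
    have main : M * d ≤ t * ‖(M:ℂ)^2 - conj a * F ζ‖ := by
      have h1 := hSch
      rw [hG] at h1
      simp only [norm_div] at h1
      rw [div_le_iff₀ hposζ] at h1
      rw [absnum ζ] at h1
      linarith
    have hca : conj a * a = (((‖a‖)^2 : ℝ) : ℂ) := by
      rw [mul_comm, Complex.mul_conj, Complex.normSq_eq_norm_sq]
    have e : (M:ℂ)^2 - conj a * F ζ
        = (((M:ℝ)^2 - (‖a‖)^2 : ℝ):ℂ) - conj a * (F ζ - a) := by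
      rw [Complex.ofReal_sub, ← hca]
      push_cast
      ring
    have tri : ‖(M:ℂ)^2 - conj a * F ζ‖
        ≤ (M^2 - (‖a‖)^2) + ‖a‖ * d := by
      rw [e]
      refine le_trans (norm_sub_le _ _) ?_
      rw [Complex.norm_real, Real.norm_eq_abs, norm_mul, Complex.norm_conj,
        _root_.abs_of_nonneg (by nlinarith : (0:ℝ) ≤ M^2 - (‖a‖)^2), ← hdd]
    have d0 : 0 ≤ d := norm_nonneg _
    have t0 : 0 ≤ t := norm_nonneg _
    have tr : t < r := mem_ball_zero_iff.mp hζ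
    have ha1 : 1 ≤ ‖a‖ := h0
    have main2 : M * d ≤ t * ((M^2 - (‖a‖)^2) + ‖a‖ * d) :=
      le_trans main (mul_le_mul_of_nonneg_left tri t0)
    have ta : t * ‖a‖ ≤ r * M :=
      mul_le_mul tr.le haM.le (norm_nonneg a) hr0.le
    have s1 : t * (M^2 - (‖a‖)^2) ≤ r * (M^2 - 1) := by
      have u1 : t * (M^2 - (‖a‖)^2) ≤ r * (M^2 - (‖a‖)^2) :=
        mul_le_mul_of_nonneg_right tr.le (by nlinarith)
      have u2 : r * (M^2 - (‖a‖)^2) ≤ r * (M^2 - 1) :=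
        mul_le_mul_of_nonneg_left (by nlinarith) hr0.le
      exact u1.trans u2
    have s2 : t * (‖a‖ * d) ≤ r * (M * d) := by nlinarith [mul_le_mul_of_nonneg_right ta d0]
    have ineq : d * (1 - r) * M ≤ (M^2 - 1) * r := by nlinarith [main2, s1, s2]
    have rhseq : (M - 1/M) * r / (1-r) = ((M^2-1)*r) / (M * (1-r)) := by
      rw [show M - 1/M = (M^2-1)/M by field_simp, div_mul_eq_mul_div, div_div]
    rw [rhseq, le_div_iff₀ (by nlinarith : (0:ℝ) < M * (1-r))]
    calc d * (M * (1-r)) = d * (1-r) * M := by ring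
      _ ≤ (M^2-1)*r := ineq


lemma ftc_aux (h g : ℂ → ℂ)
    (hh : DifferentiableOn ℂ h (ball 0 1)) (hg : DifferentiableOn ℂ g (ball 0 1))
    (r : ℝ) (hr0 : 0 < r) (hr1 : r < 1) (z₁ z₂ : ℂ)
    (hz₁ : z₁ ∈ ball (0:ℂ) r) (hz₂ : z₂ ∈ ball (0:ℂ) r) (B : ℝ)
    (hB : ∀ ζ ∈ ball (0:ℂ) r,
      ‖deriv h ζ - deriv h 0‖ + ‖deriv g ζ - deriv g 0‖ ≤ B) :
    ‖(h z₁ + conj (g z₁)) - (h z₂ + conj (g z₂))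
      - ((z₁ - z₂) * deriv h 0 + conj ((z₁ - z₂) * deriv g 0))‖
      ≤ B * ‖z₁ - z₂‖ := by
  set w : ℂ := z₁ - z₂ with hw
  set γ : ℝ → ℂ := fun t => z₂ + (t:ℂ) * w with hγ
  have hγmem : ∀ t ∈ Set.uIcc (0:ℝ) 1, γ t ∈ ball (0:ℂ) r := by
    intro t ht
    rw [Set.uIcc_of_le zero_le_one] at ht
    have hmem := (convex_ball (0:ℂ) r) hz₂ hz₁ (by linarith [ht.2] : (0:ℝ) ≤ 1 - t) ht.1
      (by ring)
    have e : γ t = (1-t) • z₂ + t • z₁ := by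
      simp only [hγ, hw, Complex.real_smul]
      push_cast
      ring
    rwa [e]
  have hγ1 : ∀ t ∈ Set.uIcc (0:ℝ) 1, γ t ∈ ball (0:ℂ) 1 :=
    fun t ht => ball_subset_ball hr1.le (hγmem t ht)
  have hγd : ∀ t : ℝ, HasDerivAt γ w t := by
    intro t
    have h1 : HasDerivAt (fun s : ℝ => (s : ℂ)) 1 t := by
      exact Complex.ofRealCLM.hasDerivAt (x := t)
    have := (h1.mul_const w).const_add z₂; rw [one_mul] at this; exact this
  set ψ : ℝ → ℂ := fun t => w * deriv h (γ t) + conj (w * deriv g (γ t)) with hψ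
  have hφd : ∀ t ∈ Set.uIcc (0:ℝ) 1,
      HasDerivAt (fun s => h (γ s) + conj (g (γ s))) (ψ t) t := by
    intro t ht
    have hmem := hγ1 t ht
    have Hh : HasDerivAt h (deriv h (γ t)) (γ t) :=
      (hh.differentiableAt (isOpen_ball.mem_nhds hmem)).hasDerivAt
    have Hg : HasDerivAt g (deriv g (γ t)) (γ t) :=
      (hg.differentiableAt (isOpen_ball.mem_nhds hmem)).hasDerivAt
    have H1 : HasDerivAt (fun s => h (γ s)) (w • deriv h (γ t)) t := Hh.scomp t (hγd t)
    have H2 : HasDerivAt (fun s => g (γ s)) (w • deriv g (γ t)) t := Hg.scomp t (hγd t)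
    have H3 := H2.star
    have := H1.add H3
    simp only [smul_eq_mul, Complex.star_def] at this; exact this
  have hγc : Continuous γ := by
    apply Continuous.add continuous_const
    exact (Complex.continuous_ofReal).mul continuous_const
  have hψc : ContinuousOn ψ (Set.uIcc (0:ℝ) 1) := by
    have hdh := ((hh.analyticOnNhd isOpen_ball).deriv).continuousOn
    have hdg := ((hg.analyticOnNhd isOpen_ball).deriv).continuousOn
    have c1 : ContinuousOn (fun t => deriv h (γ t)) (Set.uIcc (0:ℝ) 1) :=
      hdh.comp hγc.continuousOn hγ1
    have c2 : ContinuousOn (fun t => deriv g (γ t)) (Set.uIcc (0:ℝ) 1) :=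
      hdg.comp hγc.continuousOn hγ1
    exact (continuousOn_const.mul c1).add ((continuousOn_const.mul c2).star)
  have hint : IntervalIntegrable ψ MeasureTheory.volume 0 1 := hψc.intervalIntegrable
  have e1 : γ 1 = z₁ := by simp only [hγ, hw]; push_cast; ring
  have e0 : γ 0 = z₂ := by simp [hγ]
  have hFTC : ∫ t in (0:ℝ)..1, ψ t
      = (h z₁ + conj (g z₁)) - (h z₂ + conj (g z₂)) := by
    have := intervalIntegral.integral_eq_sub_of_hasDerivAt hφd hint
    rw [this, e1, e0]
  set T : ℂ := w * deriv h 0 + conj (w * deriv g 0) with hT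
  have hsub : ∫ t in (0:ℝ)..1, (ψ t - T)
      = (h z₁ + conj (g z₁)) - (h z₂ + conj (g z₂)) - T := by
    rw [intervalIntegral.integral_sub hint intervalIntegrable_const, hFTC,
      intervalIntegral.integral_const]
    simp
  have hbound : ∀ t ∈ Set.uIoc (0:ℝ) 1, ‖ψ t - T‖ ≤ B * ‖w‖ := by
    intro t ht
    have htIcc : t ∈ Set.uIcc (0:ℝ) 1 := Set.uIoc_subset_uIcc ht
    have e : ψ t - T = w * (deriv h (γ t) - deriv h 0)
        + conj (w * (deriv g (γ t) - deriv g 0)) := by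
      rw [mul_sub, mul_sub, map_sub]
      simp only [hψ, hT]
      ring
    rw [e]
    calc ‖_‖ ≤ ‖w * (deriv h (γ t) - deriv h 0)‖
          + ‖conj (w * (deriv g (γ t) - deriv g 0))‖ := norm_add_le _ _
      _ = ‖w‖ * (‖deriv h (γ t) - deriv h 0‖
          + ‖deriv g (γ t) - deriv g 0‖) := by
          rw [Complex.norm_conj, norm_mul, norm_mul]; ring
      _ ≤ ‖w‖ * B :=
          mul_le_mul_of_nonneg_left (hB (γ t) (hγmem t htIcc)) (norm_nonneg w)
      _ = B * ‖w‖ := mul_comm _ _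
  have hnorm := intervalIntegral.norm_integral_le_of_norm_le_const hbound
  rw [hsub] at hnorm
  simpa using hnorm

/-- Key estimate in the Landau-type theorem: for all `z₁, z₂` in the disk of
radius `r < 1`, `|f(z₁) − f(z₂)| ≥ |z₁ − z₂|·(1 − C·r/(1−r))`. -/
theorem landau_lower_estimate
    (K K' lam C : ℝ) (hK : 1 ≤ K) (hK' : 0 ≤ K') (hlam1 : 1 ≤ lam)
    (h g : ℂ → ℂ) (f : ℂ → ℂ)
    (hf : ∀ z : ℂ, f z = h z + conj (g z))
    (hh : DifferentiableOn ℂ h (ball 0 1))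
    (hg : DifferentiableOn ℂ g (ball 0 1))
    (hsense : ∀ z ∈ ball (0 : ℂ) 1,
      ‖deriv g z‖ < ‖deriv h z‖)
    (hell : ∀ z ∈ ball (0 : ℂ) 1,
      (‖deriv h z‖ + ‖deriv g z‖) ^ 2 ≤
        K * (‖deriv h z‖ ^ 2 - ‖deriv g z‖ ^ 2) + K')
    (hf0 : f 0 = 0)
    (hlam0 : |‖deriv h 0‖ - ‖deriv g 0‖| = 1)
    (hlam : ∀ z ∈ ball (0 : ℂ) 1,
      |‖deriv h z‖ - ‖deriv g z‖| ≤ lam)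
    (hC : C = K * lam + 2 * (K' - 1) /
      (K * lam + Real.sqrt (K ^ 2 * lam ^ 2 + 4 * K'))) :
    ∀ r : ℝ, 0 < r → r < 1 → ∀ z₁ ∈ ball (0 : ℂ) r, ∀ z₂ ∈ ball (0 : ℂ) r,
      ‖f z₁ - f z₂‖ ≥
        ‖z₁ - z₂‖ * (1 - C * r / (1 - r)) := by
  -- setup of M
  have hKl1 : 1 ≤ K * lam := by nlinarith
  set s : ℝ := Real.sqrt (K ^ 2 * lam ^ 2 + 4 * K') with hs
  have hs0 : 0 ≤ s := Real.sqrt_nonneg _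
  have hs2 : s ^ 2 = K ^ 2 * lam ^ 2 + 4 * K' := Real.sq_sqrt (by positivity)
  have hsKl : K * lam ≤ s := by nlinarith [hs2, hs0]
  set M : ℝ := (K * lam + s) / 2 with hM
  have hM1 : 1 ≤ M := by rw [hM]; nlinarith
  have hM0 : 0 < M := by linarith
  have hCM : C = M - 1 / M := by
    rw [hC, hM]
    have hd1 : K * lam + s ≠ 0 := by positivity
    field_simp
    nlinarith [hs2]
  -- distortion bound
  have hLam : ∀ z ∈ ball (0:ℂ) 1,
      ‖deriv h z‖ + ‖deriv g z‖ ≤ M := by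
    intro z hz
    set A := ‖deriv h z‖
    set Bb := ‖deriv g z‖
    have hAB : Bb < A := hsense z hz
    have hBb0 : 0 ≤ Bb := norm_nonneg _
    have hlamz : A - Bb ≤ lam := by
      have := hlam z hz
      rwa [_root_.abs_of_pos (by linarith)] at this
    have h1 : K * (A + Bb) * (A - Bb) ≤ K * (A + Bb) * lam :=
      mul_le_mul_of_nonneg_left hlamz (by nlinarith)
    have hq : (A + Bb) ^ 2 ≤ K * lam * (A + Bb) + K' := by nlinarith [hell z hz]
    by_contra hcon
    push_neg at hcon
    have f1 : 0 < A + Bb - M := by linarith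
    have f2 : 0 < A + Bb - (K * lam - s) / 2 := by rw [hM] at f1; linarith
    have := mul_pos f1 f2
    rw [hM] at this
    nlinarith [hs2]
  -- lambda at 0
  have h001 : (0:ℂ) ∈ ball (0:ℂ) 1 := mem_ball_self one_pos
  have hlam0' : ‖deriv h 0‖ - ‖deriv g 0‖ = 1 := by
    have := hsense 0 h001
    rwa [_root_.abs_of_pos (by linarith)] at hlam0
  intro r hr0 hr1 z₁ hz₁ z₂ hz₂
  -- difference bound
  have hdh : DifferentiableOn ℂ (deriv h) (ball 0 1) :=
    ((hh.analyticOnNhd isOpen_ball).deriv).differentiableOn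
  have hdg : DifferentiableOn ℂ (deriv g) (ball 0 1) :=
    ((hg.analyticOnNhd isOpen_ball).deriv).differentiableOn
  have hB : ∀ ζ ∈ ball (0:ℂ) r,
      ‖deriv h ζ - deriv h 0‖ + ‖deriv g ζ - deriv g 0‖
        ≤ (M - 1/M) * r / (1 - r) := by
    intro ζ hζ
    set u : ℂ := deriv h ζ - deriv h 0 with hu
    set v : ℂ := deriv g ζ - deriv g 0 with hv
    set e₁ : ℂ := if u = 0 then 1 else conj u / (‖u‖ : ℂ) with he₁
    set e₂ : ℂ := if v = 0 then 1 else conj v / (‖v‖ : ℂ) with he₂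
    have hunit : ∀ (c : ℂ) (e : ℂ), e = (if c = 0 then 1 else conj c / (‖c‖ : ℂ)) →
        ‖e‖ = 1 ∧ e * c = (‖c‖ : ℂ) := by
      intro c e he
      by_cases hc : c = 0
      · subst hc; simp [he]
      · constructor
        · rw [he, if_neg hc, norm_div, Complex.norm_conj, Complex.norm_real, Real.norm_eq_abs,
            abs_of_pos (norm_pos_iff.mpr hc), div_self (norm_ne_zero_iff.mpr hc)]
        · rw [he, if_neg hc, div_mul_eq_mul_div, mul_comm, Complex.mul_conj,
            Complex.normSq_eq_norm_sq]
          push_cast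
          rw [pow_two, mul_div_assoc, div_self (by simpa using hc), mul_one]
    obtain ⟨he₁abs, he₁u⟩ := hunit u e₁ he₁
    obtain ⟨he₂abs, he₂v⟩ := hunit v e₂ he₂
    set F : ℂ → ℂ := fun z => e₁ * deriv h z + e₂ * deriv g z with hF
    have hFd : DifferentiableOn ℂ F (ball 0 1) :=
      ((differentiableOn_const _).mul hdh).add ((differentiableOn_const _).mul hdg)
    have hFbd : ∀ z ∈ ball (0:ℂ) 1, ‖F z‖ ≤ M := by
      intro z hz
      calc ‖F z‖ ≤ ‖e₁ * deriv h z‖ + ‖e₂ * deriv g z‖ :=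
            norm_add_le _ _
        _ = ‖deriv h z‖ + ‖deriv g z‖ := by
            rw [norm_mul, norm_mul, he₁abs, he₂abs, one_mul, one_mul]
        _ ≤ M := hLam z hz
    have hF0 : 1 ≤ ‖F 0‖ := by
      have e : e₁ * deriv h 0 = F 0 - e₂ * deriv g 0 := by rw [hF]; ring
      have t1 : ‖e₁ * deriv h 0‖ ≤ ‖F 0‖
          + ‖e₂ * deriv g 0‖ := by
        rw [e]; exact norm_sub_le _ _
      rw [norm_mul, norm_mul, he₁abs, he₂abs, one_mul, one_mul] at t1
      linarith
    have hsp := sp_aux F M hFd hFbd hF0 r hr0 hr1 ζ hζ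
    have eFdiff : F ζ - F 0 = ((‖u‖ + ‖v‖ : ℝ) : ℂ) := by
      have e : F ζ - F 0 = e₁ * u + e₂ * v := by rw [hF, hu, hv]; ring
      rw [e, he₁u, he₂v]
      push_cast
      ring
    rw [eFdiff, Complex.norm_real, Real.norm_eq_abs,
      _root_.abs_of_nonneg (by positivity : (0:ℝ) ≤ ‖u‖ + ‖v‖)] at hsp
    exact hsp
  have hftc := ftc_aux h g hh hg r hr0 hr1 z₁ z₂ hz₁ hz₂ _ hB
  set w : ℂ := z₁ - z₂ with hw
  set T : ℂ := w * deriv h 0 + conj (w * deriv g 0) with hT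
  have hTlow : ‖w‖ ≤ ‖T‖ := by
    have e : w * deriv h 0 = T - conj (w * deriv g 0) := by rw [hT]; ring
    have t1 : ‖w * deriv h 0‖ ≤ ‖T‖
        + ‖conj (w * deriv g 0)‖ := by
      rw [e]; exact norm_sub_le _ _
    rw [norm_mul, Complex.norm_conj, norm_mul] at t1
    nlinarith [hlam0', norm_nonneg w]
  have hfz : f z₁ - f z₂ = (h z₁ + conj (g z₁)) - (h z₂ + conj (g z₂)) := by
    rw [hf z₁, hf z₂]
  have htri : ‖T‖ ≤ ‖f z₁ - f z₂‖
      + ‖(h z₁ + conj (g z₁)) - (h z₂ + conj (g z₂)) - T‖ := by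
    have e : T = (f z₁ - f z₂) - ((h z₁ + conj (g z₁)) - (h z₂ + conj (g z₂)) - T) := by
      rw [hfz]; ring
    calc ‖T‖ = ‖(f z₁ - f z₂)
          - ((h z₁ + conj (g z₁)) - (h z₂ + conj (g z₂)) - T)‖ := by rw [← e]
      _ ≤ _ := norm_sub_le _ _
  have hfinal : ‖w‖ - (M - 1/M) * r / (1-r) * ‖w‖
      ≤ ‖f z₁ - f z₂‖ := by
    linarith [hTlow, htri, hftc]
  rw [hCM]
  calc ‖z₁ - z₂‖ * (1 - (M - 1/M) * r / (1 - r))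
      = ‖w‖ - (M - 1/M) * r / (1-r) * ‖w‖ := by rw [hw]; ring
    _ ≤ ‖f z₁ - f z₂‖ := hfinal
end

section
/- For all real numbers K ≥ 1, K' ≥ 0 and λ > 1, set C = Kλ + 2(K'−1)/(Kλ + √(K²λ² + 4K')), σ₁ = 1 + C·ln(C/(1 + C)), and σ = 1 + (Kλ + √(K'))·ln((Kλ + √(K'))/(1 + Kλ + √(K'))). Then σ₁ > σ. -/
open Real

lemma sigma_hasDerivAt (x : ℝ) (hx : 0 < x) :
    HasDerivAt (fun y : ℝ => 1 + y * Real.log (y / (1 + y)))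
      (Real.log (x / (1 + x)) + 1 / (1 + x)) x := by
  have h1 : (0:ℝ) < 1 + x := by linarith
  have hinner : HasDerivAt (fun y : ℝ => y / (1 + y))
      ((1 * (1 + x) - x * (0 + 1)) / (1 + x) ^ 2) x :=
    (hasDerivAt_id x).div ((hasDerivAt_const x 1).add (hasDerivAt_id x)) (by positivity)
  have hq : x / (1 + x) ≠ 0 := by positivity
  have hlog : HasDerivAt (fun y : ℝ => Real.log (y / (1 + y)))
      (((1 * (1 + x) - x * (0 + 1)) / (1 + x) ^ 2) / (x / (1 + x))) x :=
    hinner.log hq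
  have hmul : HasDerivAt (fun y : ℝ => y * Real.log (y / (1 + y)))
      (1 * Real.log (x / (1 + x)) +
        x * (((1 * (1 + x) - x * (0 + 1)) / (1 + x) ^ 2) / (x / (1 + x)))) x :=
    (hasDerivAt_id x).mul hlog
  have h : HasDerivAt (fun y : ℝ => 1 + y * Real.log (y / (1 + y))) _ x :=
    (hasDerivAt_const x (1:ℝ)).add hmul
  convert h using 1
  have hx0 : x ≠ 0 := hx.ne'
  field_simp
  ring

lemma sigma_strictAnti :
    StrictAntiOn (fun y : ℝ => 1 + y * Real.log (y / (1 + y))) (Set.Ioi 0) := by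
  have hderiv : ∀ x ∈ interior (Set.Ioi (0:ℝ)),
      deriv (fun y : ℝ => 1 + y * Real.log (y / (1 + y))) x < 0 := by
    intro x hx
    rw [interior_Ioi] at hx
    have hx : (0:ℝ) < x := hx
    have h1 : (0:ℝ) < 1 + x := by linarith
    rw [(sigma_hasDerivAt x hx).deriv]
    have hne : x / (1 + x) ≠ 1 := by
      intro h
      rw [div_eq_one_iff_eq h1.ne'] at h
      linarith
    have hlt := Real.log_lt_sub_one_of_pos (by positivity : 0 < x / (1 + x)) hne
    have : x / (1 + x) - 1 = -(1 / (1 + x)) := by field_simp; ring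
    linarith [hlt, this ▸ hlt]
  apply strictAntiOn_of_deriv_neg (convex_Ioi 0) ?_ hderiv
  intro x hx
  exact (sigma_hasDerivAt x hx).differentiableAt.continuousAt.continuousWithinAt

/-- For all K ≥ 1, K' ≥ 0 and λ > 1, with
`C = Kλ + 2(K'−1)/(Kλ + √(K²λ² + 4K'))`,
`σ₁ = 1 + C·ln(C/(1+C))` and `σ = 1 + (Kλ+√K')·ln((Kλ+√K')/(1+Kλ+√K'))`,
one has `σ₁ > σ`. -/
theorem sigma1_gt_sigma (K K' lam C σ₁ σ : ℝ) (hK : 1 ≤ K) (hK' : 0 ≤ K')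
    (hlam : 1 < lam)
    (hC : C = K * lam + 2 * (K' - 1) /
      (K * lam + Real.sqrt (K ^ 2 * lam ^ 2 + 4 * K')))
    (hσ₁ : σ₁ = 1 + C * Real.log (C / (1 + C)))
    (hσ : σ = 1 + (K * lam + Real.sqrt K') *
      Real.log ((K * lam + Real.sqrt K') / (1 + K * lam + Real.sqrt K'))) :
    σ₁ > σ := by
  set a := K * lam with ha
  have ha1 : 1 < a := by nlinarith
  set s := Real.sqrt K' with hs
  have hs0 : 0 ≤ s := Real.sqrt_nonneg _
  have hs2 : s ^ 2 = K' := Real.sq_sqrt hK'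
  set R := Real.sqrt (K ^ 2 * lam ^ 2 + 4 * K') with hR
  have hRa : a ≤ R := by
    rw [hR]
    have : a = Real.sqrt (a ^ 2) := (Real.sqrt_sq (by linarith)).symm
    rw [this]
    apply Real.sqrt_le_sqrt
    nlinarith
  have hR2s : 2 * s ≤ R := by
    rw [hR]
    have : 2 * s = Real.sqrt ((2 * s) ^ 2) := (Real.sqrt_sq (by linarith)).symm
    rw [this]
    apply Real.sqrt_le_sqrt
    nlinarith
  set D := a + R with hD
  have hDpos : 0 < D := by linarith
  have hCD : C * D = a * D + 2 * (s ^ 2 - 1) := by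
    rw [hC, hs2]
    field_simp [hD, ha]
  have hCpos : 0 < C := by nlinarith
  have hClt : C < a + s := by nlinarith
  have key := sigma_strictAnti (Set.mem_Ioi.mpr hCpos)
    (Set.mem_Ioi.mpr (by nlinarith : (0:ℝ) < a + s)) hClt
  simp only at key
  rw [hσ₁, hσ]
  have h1 : 1 + K * lam + Real.sqrt K' = 1 + (a + s) := by rw [ha, hs]; ring
  rw [h1]
  exact key
end
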